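/- arXiv:0902.2495 — 3 statements merged into one kernel-verified Lean document; each statement's English description precedes it below -/
import Mathlib

section
/- Let M and N be purely imaginary octonions with |M| = |N| = 1 and Re(M * conj(N)) = 0. Then for every z in the complex plane R ⊕ M·R (i.e., z = a + bM with a,b real), one has N*(z*conj(N)) = conj(z) and (N*z)*conj(N) = conj(z). -/
/-- The octonion algebra `𝕆`, realized as the Cayley–Dickson double of the
real quaternions: pairs `(x, y)` of quaternions with multiplication
`(u, v) * (w, x) = (u*w - x̄*v, x*u + v*w̄)`. -/
structure Octonion : Type where
  x : Quaternion ℝ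
  y : Quaternion ℝ

namespace Octonion

noncomputable instance : Add Octonion := ⟨fun a b => ⟨a.x + b.x, a.y + b.y⟩⟩
noncomputable instance : Neg Octonion := ⟨fun a => ⟨-a.x, -a.y⟩⟩
noncomputable instance : Mul Octonion :=
  ⟨fun a b => ⟨a.x * b.x - star b.y * a.y, b.y * a.x + a.y * star b.x⟩⟩
noncomputable instance : One Octonion := ⟨⟨1, 0⟩⟩
noncomputable instance : SMul ℝ Octonion := ⟨fun r a => ⟨r • a.x, r • a.y⟩⟩

/-- Octonion conjugation. -/
def conj (a : Octonion) : Octonion := ⟨star a.x, -a.y⟩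

/-- Real part of an octonion. -/
def re (a : Octonion) : ℝ := a.x.re

/-- Squared norm of an octonion. -/
def normSq (a : Octonion) : ℝ := Quaternion.normSq a.x + Quaternion.normSq a.y

end Octonion

/-!
Orthogonal purely imaginary octonions anticommute, and a purely imaginary unit `N` has
`conj N = -N` and `N * N = -1`. By alternativity, `N * (M * conj N) = N * (N * M) = (N * N) * M = -M`
and `(N * M) * conj N = M * (N * N) = -M`, while `N * conj N = 1`; so both sandwiches fix `1` and
negate `M`, which is exactly conjugation on `ℝ ⊕ Mℝ`.
-/

open scoped Quaternion

namespace Octonion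

attribute [ext] Octonion

section Algebra

variable (a b c : Octonion) (r : ℝ)

@[simp] theorem x_add : (a + b).x = a.x + b.x := rfl
@[simp] theorem y_add : (a + b).y = a.y + b.y := rfl
@[simp] theorem x_neg : (-a).x = -a.x := rfl
@[simp] theorem y_neg : (-a).y = -a.y := rfl
@[simp] theorem x_mul : (a * b).x = a.x * b.x - star b.y * a.y := rfl
@[simp] theorem y_mul : (a * b).y = b.y * a.x + a.y * star b.x := rfl
@[simp] theorem x_one : (1 : Octonion).x = 1 := rfl
@[simp] theorem y_one : (1 : Octonion).y = 0 := rfl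
@[simp] theorem x_smul : (r • a).x = r • a.x := rfl
@[simp] theorem y_smul : (r • a).y = r • a.y := rfl
@[simp] theorem x_conj : (conj a).x = star a.x := rfl
@[simp] theorem y_conj : (conj a).y = -a.y := rfl


theorem mul_add : a * (b + c) = a * b + a * c := by ext <;> simp <;> ring
theorem add_mul : (a + b) * c = a * c + b * c := by ext <;> simp <;> ring
theorem mul_neg : a * -b = -(a * b) := by ext <;> simp <;> ring
theorem neg_mul : -a * b = -(a * b) := by ext <;> simp <;> ring
theorem neg_neg : - -a = a := by ext <;> simp
theorem smul_mul : (r • a) * b = r • (a * b) := by ext <;> simp <;> ring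
theorem mul_smul : a * (r • b) = r • (a * b) := by ext <;> simp <;> ring
theorem one_mul : 1 * a = a := by ext <;> simp
theorem mul_one : a * 1 = a := by ext <;> simp
theorem one_smul : (1 : ℝ) • a = a := by ext <;> simp

theorem conj_add : conj (a + b) = conj a + conj b := by ext <;> simp <;> ring
theorem conj_smul : conj (r • a) = r • conj a := by ext <;> simp
theorem conj_one : conj 1 = 1 := by ext <;> simp

theorem mul_conj_self : a * conj a = normSq a • 1 := by
  ext <;> simp [normSq, Quaternion.normSq_def'] <;> ring

theorem left_alternative : a * (a * b) = a * a * b := by ext <;> simp <;> ring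
theorem right_alternative : a * b * b = a * (b * b) := by ext <;> simp <;> ring

end Algebra

section Imaginary

variable {a b : Octonion}

theorem conj_eq_neg_of_re_eq_zero (ha : re a = 0) : conj a = -a := by
  simp only [re] at ha
  ext <;> simp [ha]

theorem mul_self_of_re_eq_zero (ha : re a = 0) : a * a = -(normSq a • 1) := by
  rw [← mul_conj_self, conj_eq_neg_of_re_eq_zero ha, mul_neg, neg_neg]

theorem mul_anticomm_of_orthogonal (ha : re a = 0) (hb : re b = 0)
    (hab : re (a * conj b) = 0) : a * b = -(b * a) := by
  simp only [re] at ha hb hab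
  simp [ha, hb] at hab
  ext
  · simp [ha, hb]
    linear_combination (-2 : ℝ) * hab
  all_goals simp [ha, hb]; ring

theorem mul_mul_conj_eq_neg_of_orthogonal (ha : re a = 0) (hb : re b = 0)
    (hb1 : normSq b = 1) (hab : re (a * conj b) = 0) : b * (a * conj b) = -a := by
  calc b * (a * conj b) = b * (b * a) := by
        rw [conj_eq_neg_of_re_eq_zero hb, mul_neg, mul_anticomm_of_orthogonal ha hb hab,
          neg_neg]
    _ = b * b * a := left_alternative b a
    _ = -a := by rw [mul_self_of_re_eq_zero hb, hb1, one_smul, neg_mul, one_mul]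

theorem mul_mul_conj_eq_neg_of_orthogonal' (ha : re a = 0) (hb : re b = 0)
    (hb1 : normSq b = 1) (hab : re (a * conj b) = 0) : b * a * conj b = -a := by
  calc b * a * conj b = a * b * b := by
        rw [conj_eq_neg_of_re_eq_zero hb, mul_neg, ← neg_mul,
          ← mul_anticomm_of_orthogonal ha hb hab]
    _ = a * (b * b) := right_alternative a b
    _ = -a := by rw [mul_self_of_re_eq_zero hb, hb1, one_smul, mul_neg, mul_one]

end Imaginary

end Octonion

theorem octonion_conj_via_orthogonal_unit_general (M N : Octonion)
    (hM : Octonion.re M = 0) (hN : Octonion.re N = 0)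
    (hNnorm : Octonion.normSq N = 1)
    (hMN : Octonion.re (M * Octonion.conj N) = 0) :
    ∀ a b : ℝ,
      N * ((a • (1 : Octonion) + b • M) * Octonion.conj N)
          = Octonion.conj (a • (1 : Octonion) + b • M) ∧
      (N * (a • (1 : Octonion) + b • M)) * Octonion.conj N
          = Octonion.conj (a • (1 : Octonion) + b • M) := by
  intro a b
  have hconjM : M.conj = -M := Octonion.conj_eq_neg_of_re_eq_zero hM
  have hleft : N * (M * N.conj) = -M :=
    Octonion.mul_mul_conj_eq_neg_of_orthogonal hM hN hNnorm hMN
  have hright : N * M * N.conj = -M :=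
    Octonion.mul_mul_conj_eq_neg_of_orthogonal' hM hN hNnorm hMN
  constructor <;>
    simp only [Octonion.add_mul, Octonion.mul_add, Octonion.smul_mul, Octonion.mul_smul,
      Octonion.one_mul, Octonion.mul_one, Octonion.mul_conj_self, hNnorm, Octonion.one_smul,
      hleft, hright, Octonion.conj_add, Octonion.conj_smul, Octonion.conj_one, hconjM]

/-- If `M`, `N` are orthogonal purely imaginary unit octonions, then for every
`z = a + b•M` in the complex plane `ℝ ⊕ Mℝ` one has `N*(z*conj N) = conj z`
and `(N*z)*conj N = conj z`. -/
theorem octonion_conj_via_orthogonal_unit (M N : Octonion)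
    (hM : Octonion.re M = 0) (hN : Octonion.re N = 0)
    (hMnorm : Octonion.normSq M = 1) (hNnorm : Octonion.normSq N = 1)
    (hMN : Octonion.re (M * Octonion.conj N) = 0) :
    ∀ a b : ℝ,
      N * ((a • (1 : Octonion) + b • M) * Octonion.conj N)
          = Octonion.conj (a • (1 : Octonion) + b • M) ∧
      (N * (a • (1 : Octonion) + b • M)) * Octonion.conj N
          = Octonion.conj (a • (1 : Octonion) + b • M) :=
  octonion_conj_via_orthogonal_unit_general M N hM hN hNnorm hMN
end

section
/- A quaternion y with polar form y = ρ·exp(S), where ρ = |y| ≥ 0 and S is purely imaginary, satisfies y² = -1 if and only if ρ = 1 and |S| = π(m + 1/2) for some nonnegative integer m. -/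
/-! For purely imaginary `S`, `expPure S` is the exponential `exp S`, hence a unit quaternion with
`exp S * exp S = exp (2 • S)`. So `y * y = ρ² • exp (2 • S)`, and taking norms forces `ρ = 1`; the
real part then shows `exp (2 • S) = -1` exactly when `cos (2‖S‖) = -1`, i.e. `cos ‖S‖ = 0`. -/

open scoped Quaternion

/-- Exponential of a purely imaginary quaternion:
`exp S = cos |S| + (sin |S| / |S|) • S` (with `exp 0 = 1`). -/
noncomputable def expPure (S : ℍ[ℝ]) : ℍ[ℝ] :=
  Real.cos ‖S‖ • (1 : ℍ[ℝ]) + (Real.sin ‖S‖ / ‖S‖) • S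

open NormedSpace

theorem Real.cos_eq_zero_iff_of_nonneg {x : ℝ} (hx : 0 ≤ x) :
    Real.cos x = 0 ↔ ∃ m : ℕ, x = Real.pi * (m + 1 / 2) := by
  rw [Real.cos_eq_zero_iff]
  constructor
  · rintro ⟨k, rfl⟩
    have hk : 0 ≤ k := by
      have : (-1 : ℝ) < k := by nlinarith [Real.pi_pos]
      have : (-1 : ℤ) < k := by exact_mod_cast this
      omega
    lift k to ℕ using hk
    exact ⟨k, by push_cast; ring⟩
  · rintro ⟨m, rfl⟩
    exact ⟨m, by push_cast; ring⟩

theorem Real.cos_two_mul_eq_neg_one_iff (x : ℝ) : Real.cos (2 * x) = -1 ↔ Real.cos x = 0 := by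
  rw [Real.cos_two_mul]
  constructor <;> intro h <;> nlinarith [sq_nonneg (Real.cos x)]

section expPure

variable {S : ℍ[ℝ]}

theorem expPure_eq_exp (hS : S.re = 0) : expPure S = exp S := by
  rw [Quaternion.exp_of_re_eq_zero S hS, expPure, ← Quaternion.coe_mul_eq_smul, mul_one]

theorem re_expPure (hS : S.re = 0) : (expPure S).re = Real.cos ‖S‖ := by
  simp [expPure, hS]

theorem norm_expPure (hS : S.re = 0) : ‖expPure S‖ = 1 := by
  rw [expPure_eq_exp hS, Quaternion.norm_exp, hS, exp_zero, norm_one]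

theorem expPure_mul_self (hS : S.re = 0) : expPure S * expPure S = expPure ((2 : ℝ) • S) := by
  have h2S : ((2 : ℝ) • S).re = 0 := by simp [hS]
  have hball : S ∈ Metric.eball 0 (expSeries ℝ ℍ[ℝ]).radius :=
    (expSeries_radius_eq_top ℝ ℍ[ℝ]).symm ▸ edist_lt_top _ _
  rw [expPure_eq_exp hS, expPure_eq_exp h2S, two_smul,
    exp_add_of_commute_of_mem_ball (Commute.refl S) hball hball]

theorem expPure_eq_neg_one_iff (hS : S.re = 0) : expPure S = -1 ↔ Real.cos ‖S‖ = -1 := by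
  refine ⟨fun h ↦ by simpa [h] using (re_expPure hS).symm, fun h ↦ ?_⟩
  have hsin : Real.sin ‖S‖ = 0 := by nlinarith [Real.sin_sq_add_cos_sq ‖S‖]
  simp [expPure, h, hsin]

theorem smul_expPure_eq_neg_one_iff {r : ℝ} (hr : 0 ≤ r) (hS : S.re = 0) :
    r • expPure S = -1 ↔ r = 1 ∧ expPure S = -1 := by
  refine ⟨fun h ↦ ?_, fun ⟨hr1, h⟩ ↦ by rw [hr1, one_smul, h]⟩
  have hr1 : r = 1 := by
    simpa [norm_smul, norm_expPure hS, abs_of_nonneg hr] using congrArg norm h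
  exact ⟨hr1, by rwa [hr1, one_smul] at h⟩

end expPure

/-- A quaternion `y = ρ·exp(S)` with `ρ = |y|` and `S` purely imaginary
satisfies `y² = -1` if and only if `ρ = 1` and `|S| = π(m + 1/2)` for some
nonnegative integer `m`. -/
theorem quaternion_sq_eq_neg_one_iff (y S : ℍ[ℝ]) (ρ : ℝ)
    (hS : S.re = 0) (hρ : ρ = ‖y‖) (hy : y = ρ • expPure S) :
    y * y = -1 ↔ ρ = 1 ∧ ∃ m : ℕ, ‖S‖ = Real.pi * (m + 1 / 2) := by
  have hρ0 : 0 ≤ ρ := hρ ▸ norm_nonneg y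
  have h2S : ((2 : ℝ) • S).re = 0 := by simp [hS]
  rw [hy, smul_mul_smul_comm, expPure_mul_self hS, smul_expPure_eq_neg_one_iff (by positivity) h2S,
    expPure_eq_neg_one_iff h2S, norm_smul, Real.norm_two, Real.cos_two_mul_eq_neg_one_iff,
    Real.cos_eq_zero_iff_of_nonneg (norm_nonneg S), ← sq, pow_eq_one_iff_of_nonneg hρ0 two_ne_zero]
end

section
/- Given a Lie algebra g over a commutative ring with symmetric invariant form, the central extension L̂ = (R[z,z⁻¹] ⊗ g) ⊕ R·K with bracket [a + αK, b + βK] := [a,b]₀ + ω(a,b)·K (where ω(P⊗x, Q⊗y) = res(P'Q)(x|y) and K central) satisfies the Jacobi identity, hence L̂ is a Lie algebra. -/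
/-!
The `g`-component of the Jacobi identity for `L̂` is the Jacobi identity of the loop algebra, and
the central component is the cocycle identity `ω([a,b],c) + ω([b,c],a) + ω([c,a],b) = 0`. Its
left side is additive in each variable, so it suffices to check it on pure tensors `P ⊗ x`,
`Q ⊗ y`, `S ⊗ z`. There symmetry and invariance of `B` make all three values of `B` equal to
`B([x,y],z)`, and the Leibniz rule turns `(PQ)'S + (QS)'P + (SP)'Q` into `2 (PQS)'`, whose
residue vanishes.
-/

open LaurentPolynomial
open scoped LaurentPolynomial

/-- Formal derivative of a Laurent polynomial. -/
noncomputable def lderiv {R : Type*} [Ring R] (f : R[T;T⁻¹]) : R[T;T⁻¹] :=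
  Finsupp.sum f.coeff fun n a => (n : ℤ) • (LaurentPolynomial.C a * LaurentPolynomial.T (n - 1))

/-- The residue of a Laurent polynomial: the coefficient of `z⁻¹`. -/
noncomputable def lres {R : Type*} [Ring R] (f : R[T;T⁻¹]) : R :=
  (f.coeff : ℤ →₀ R) (-1)

/-- The operator `d_l P := -z^{l+1} P'`. -/
noncomputable def dOp {R : Type*} [Ring R] (l : ℤ) (f : R[T;T⁻¹]) : R[T;T⁻¹] :=
  -(LaurentPolynomial.T (l + 1) * lderiv f)

open scoped TensorProduct

/-- The bracket of the central extension
`L̂ = (R[z,z⁻¹] ⊗ g) ⊕ R·K`, `[a + αK, b + βK] = [a,b]₀ + ω(a,b)K`. -/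
noncomputable def centralBracket {R : Type*} [CommRing R]
    {g : Type*} [LieRing g] [LieAlgebra R g]
    (ω : (R[T;T⁻¹] ⊗[R] g) →ₗ[R] (R[T;T⁻¹] ⊗[R] g) →ₗ[R] R)
    (u v : (R[T;T⁻¹] ⊗[R] g) × R) : (R[T;T⁻¹] ⊗[R] g) × R :=
  (⁅u.1, v.1⁆, ω u.1 v.1)

section LaurentPolynomial

variable {R : Type*} [Ring R]

lemma C_mul_T_mul_C_mul_T (a b : R) (m n : ℤ) :
    C a * T m * (C b * T n) = C (a * b) * T (m + n) := by
  simp only [← single_eq_C_mul_T]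
  exact AddMonoidAlgebra.single_mul_single _ _ _ _

lemma lderiv_C_mul_T (a : R) (n : ℤ) : lderiv (C a * T n) = C (n • a) * T (n - 1) := by
  rw [← single_eq_C_mul_T, lderiv, AddMonoidAlgebra.coeff_single,
    Finsupp.sum_single_index (by simp), map_zsmul, smul_mul_assoc]

lemma lderiv_add (f g : R[T;T⁻¹]) : lderiv (f + g) = lderiv f + lderiv g := by
  rw [lderiv, AddMonoidAlgebra.coeff_add]
  exact Finsupp.sum_add_index (by simp) fun _ _ _ _ => by simp only [map_add, add_mul, smul_add]

lemma lderiv_mul (f g : R[T;T⁻¹]) : lderiv (f * g) = lderiv f * g + f * lderiv g := by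
  induction f using LaurentPolynomial.induction_on' with
  | add p q hp hq => simp only [add_mul, lderiv_add, hp, hq]; abel
  | C_mul_T m a =>
    induction g using LaurentPolynomial.induction_on' with
    | add p q hp hq => simp only [mul_add, lderiv_add, hp, hq]; abel
    | C_mul_T n b =>
      simp only [C_mul_T_mul_C_mul_T, lderiv_C_mul_T, show m - 1 + n = m + n - 1 by ring,
        show m + (n - 1) = m + n - 1 by ring, ← add_mul, ← map_add, smul_mul_assoc,
        mul_smul_comm, add_smul]

lemma lres_add (f g : R[T;T⁻¹]) : lres (f + g) = lres f + lres g := rfl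

lemma lres_C_mul_T (a : R) (n : ℤ) : lres (C a * T n) = if n = -1 then a else 0 := by
  rw [← single_eq_C_mul_T, lres, AddMonoidAlgebra.coeff_single, Finsupp.single_apply]

lemma lres_lderiv (f : R[T;T⁻¹]) : lres (lderiv f) = 0 := by
  induction f using LaurentPolynomial.induction_on' with
  | add p q hp hq => rw [lderiv_add, lres_add, hp, hq, add_zero]
  | C_mul_T n a =>
    rw [lderiv_C_mul_T, lres_C_mul_T]
    split_ifs with h
    · rw [show n = 0 by omega, zero_smul]
    · rfl

end LaurentPolynomial

lemma lres_lderiv_mul_cyclic {R : Type*} [CommRing R] (P Q S : R[T;T⁻¹]) :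
    lres (lderiv (P * Q) * S) + lres (lderiv (Q * S) * P) + lres (lderiv (S * P) * Q) = 0 := by
  have hsum : lderiv (P * Q) * S + lderiv (Q * S) * P + lderiv (S * P) * Q
      = lderiv (P * Q * S) + lderiv (P * Q * S) := by
    simp only [lderiv_mul]; ring
  rw [← lres_add, ← lres_add, hsum, lres_add, lres_lderiv, add_zero]

lemma lie_lie_add_lie_lie_add_lie_lie {L : Type*} [LieRing L] (x y z : L) :
    ⁅⁅x, y⁆, z⁆ + ⁅⁅y, z⁆, x⁆ + ⁅⁅z, x⁆, y⁆ = 0 := by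
  rw [← lie_skew ⁅x, y⁆, ← lie_skew ⁅y, z⁆, ← lie_skew ⁅z, x⁆, ← neg_add, ← neg_add, lie_jacobi,
    neg_zero]

section Cocycle

variable {R : Type*} [CommRing R] {M N : Type*} [LieRing M] [Module R M]
  [AddCommGroup N] [Module R N]

def cyclicSum (ω : M →ₗ[R] M →ₗ[R] N) (a b c : M) : N :=
  ω ⁅a, b⁆ c + ω ⁅b, c⁆ a + ω ⁅c, a⁆ b

variable (ω : M →ₗ[R] M →ₗ[R] N)

lemma cyclicSum_rotate (a b c : M) : cyclicSum ω a b c = cyclicSum ω b c a := by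
  simp only [cyclicSum]; abel

lemma cyclicSum_zero_left (b c : M) : cyclicSum ω 0 b c = 0 := by
  simp [cyclicSum]

lemma cyclicSum_add_left (a₁ a₂ b c : M) :
    cyclicSum ω (a₁ + a₂) b c = cyclicSum ω a₁ b c + cyclicSum ω a₂ b c := by
  simp only [cyclicSum, add_lie, lie_add, map_add, LinearMap.add_apply]; abel

end Cocycle

section TensorProduct

variable {R A g N : Type*} [CommRing R] [CommRing A] [Algebra R A] [LieRing g] [LieAlgebra R g]
  [AddCommGroup N] [Module R N] (ω : A ⊗[R] g →ₗ[R] A ⊗[R] g →ₗ[R] N)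

lemma cyclicSum_eq_zero_of_tmul_left (b c : A ⊗[R] g)
    (h : ∀ (P : A) (x : g), cyclicSum ω (P ⊗ₜ x) b c = 0) (a : A ⊗[R] g) :
    cyclicSum ω a b c = 0 := by
  induction a using TensorProduct.induction_on with
  | zero => exact cyclicSum_zero_left ω b c
  | tmul P x => exact h P x
  | add a₁ a₂ h₁ h₂ => rw [cyclicSum_add_left, h₁, h₂, add_zero]

lemma cyclicSum_eq_zero_of_tmul
    (h : ∀ (P Q S : A) (x y z : g), cyclicSum ω (P ⊗ₜ x) (Q ⊗ₜ y) (S ⊗ₜ z) = 0)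
    (a b c : A ⊗[R] g) : cyclicSum ω a b c = 0 := by
  have h₁ (a : A ⊗[R] g) (Q S : A) (y z : g) : cyclicSum ω a (Q ⊗ₜ y) (S ⊗ₜ z) = 0 :=
    cyclicSum_eq_zero_of_tmul_left ω _ _ (fun P x => h P Q S x y z) a
  have h₂ (a b : A ⊗[R] g) (S : A) (z : g) : cyclicSum ω a b (S ⊗ₜ z) = 0 := by
    rw [cyclicSum_rotate]
    refine cyclicSum_eq_zero_of_tmul_left ω _ _ (fun Q y => ?_) b
    rw [← cyclicSum_rotate]
    exact h₁ a Q S y z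
  rw [cyclicSum_rotate, cyclicSum_rotate]
  refine cyclicSum_eq_zero_of_tmul_left ω _ _ (fun S z => ?_) c
  rw [← cyclicSum_rotate, ← cyclicSum_rotate]
  exact h₂ a b S z

end TensorProduct

lemma cyclicSum_tmul_eq_zero_of_lieInvariant {R : Type*} [CommRing R] {g : Type*} [LieRing g]
    [LieAlgebra R g] (B : g →ₗ[R] g →ₗ[R] R)
    (hsym : ∀ x y : g, B x y = B y x)
    (hinv : ∀ x y z : g, B ⁅x, y⁆ z = B x ⁅y, z⁆)
    (ω : (R[T;T⁻¹] ⊗[R] g) →ₗ[R] (R[T;T⁻¹] ⊗[R] g) →ₗ[R] R)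
    (hω : ∀ (P Q : R[T;T⁻¹]) (x y : g),
      ω (P ⊗ₜ[R] x) (Q ⊗ₜ[R] y) = lres (lderiv P * Q) * B x y)
    (P Q S : R[T;T⁻¹]) (x y z : g) :
    cyclicSum ω (P ⊗ₜ x) (Q ⊗ₜ y) (S ⊗ₜ z) = 0 := by
  have hyzx : B ⁅y, z⁆ x = B ⁅x, y⁆ z := by rw [hsym, hinv]
  have hzxy : B ⁅z, x⁆ y = B ⁅x, y⁆ z := by rw [hinv, hsym]
  simp only [cyclicSum, LieAlgebra.ExtendScalars.bracket_tmul, hω, hyzx, hzxy, ← add_mul,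
    lres_lderiv_mul_cyclic, zero_mul]

/-- The centrally extended loop algebra `L̂ = (R[z,z⁻¹] ⊗ g) ⊕ R·K` with
bracket `[a + αK, b + βK] = [a,b]₀ + ω(a,b)K`, where
`ω(P⊗x,Q⊗y) = res(P'Q)·B(x,y)` and `K` is central, satisfies the Jacobi
identity. -/
theorem central_extension_jacobi {R : Type*} [CommRing R]
    {g : Type*} [LieRing g] [LieAlgebra R g]
    (B : g →ₗ[R] g →ₗ[R] R)
    (hsym : ∀ x y : g, B x y = B y x)
    (hinv : ∀ x y z : g, B ⁅x, y⁆ z = B x ⁅y, z⁆)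
    (ω : (R[T;T⁻¹] ⊗[R] g) →ₗ[R] (R[T;T⁻¹] ⊗[R] g) →ₗ[R] R)
    (hω : ∀ (P Q : R[T;T⁻¹]) (x y : g),
      ω (P ⊗ₜ[R] x) (Q ⊗ₜ[R] y) = lres (lderiv P * Q) * B x y) :
    ∀ u v w : (R[T;T⁻¹] ⊗[R] g) × R,
      centralBracket ω (centralBracket ω u v) w
        + centralBracket ω (centralBracket ω v w) u
        + centralBracket ω (centralBracket ω w u) v = 0 := by
  intro u v w
  have hcocycle := cyclicSum_tmul_eq_zero_of_lieInvariant B hsym hinv ω hω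
  exact Prod.ext (lie_lie_add_lie_lie_add_lie_lie u.1 v.1 w.1)
    (cyclicSum_eq_zero_of_tmul ω hcocycle u.1 v.1 w.1)
end
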